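/- arXiv:1312.6262 — 5 statements merged into one kernel-verified Lean document; each statement's English description precedes it below -/
import Mathlib

section
/- If h : A → ℝ is a unital ℝ-algebra homomorphism from the fibered product A = A1 ×_C A2, then ker π1 ⊆ ker h or ker π2 ⊆ ker h; equivalently, h factors through π1 or through π2. -/
/-- The fibered product `A = A₁ ×_C A₂` as a subalgebra of `A₁ × A₂`. -/
noncomputable def fiberProd {A1 A2 C : Type} [CommRing A1] [CommRing A2] [CommRing C]
    [Algebra ℝ A1] [Algebra ℝ A2] [Algebra ℝ C]
    (p1 : A1 →ₐ[ℝ] C) (p2 : A2 →ₐ[ℝ] C) : Subalgebra ℝ (A1 × A2) :=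
  AlgHom.equalizer (p1.comp (AlgHom.fst ℝ A1 A2)) (p2.comp (AlgHom.snd ℝ A1 A2))

/-- any unital ℝ-algebra homomorphism `h : A → ℝ` from the fibered
product kills `ker π₁` or kills `ker π₂`, i.e. factors through `π₁` or `π₂`. -/
theorem spectrum_point_factors
    {A1 A2 C : Type} [CommRing A1] [CommRing A2] [CommRing C]
    [Algebra ℝ A1] [Algebra ℝ A2] [Algebra ℝ C]
    (p1 : A1 →ₐ[ℝ] C) (p2 : A2 →ₐ[ℝ] C)
    (h : fiberProd p1 p2 →ₐ[ℝ] ℝ) :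
    (∀ x : fiberProd p1 p2, (x : A1 × A2).1 = 0 → h x = 0) ∨
    (∀ x : fiberProd p1 p2, (x : A1 × A2).2 = 0 → h x = 0) := by
  by_contra hc
  push_neg at hc
  obtain ⟨⟨x, hx1, hx2⟩, ⟨y, hy1, hy2⟩⟩ := hc
  have hxy : x * y = 0 := by
    apply Subtype.ext
    show ((x : A1 × A2) * (y : A1 × A2)) = 0
    ext
    · simp [hx1]
    · simp [hy1]
  have := map_mul h x y
  rw [hxy, map_zero] at this
  rcases mul_eq_zero.mp this.symm with h1 | h1
  · exact hx2 h1
  · exact hy2 h1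
end

section
/- Let A = A1 ×_C A2 be the fibered product of surjective unital algebra homomorphisms p1 : A1 → C, p2 : A2 → C. A homomorphism h ∈ Spec_ℝ(A) lies in the image of both |π1| : Spec_ℝ(A1) → Spec_ℝ(A) and |π2| : Spec_ℝ(A2) → Spec_ℝ(A) if and only if h factors through p1 ∘ π1 = p2 ∘ π2 : A → C. Consequently Spec_ℝ(A) is the gluing (pushout as sets) of Spec_ℝ(A1) and Spec_ℝ(A2) along Spec_ℝ(C). -/
theorem AlgHom.exists_eq_comp_iff_ker_le {R A B D : Type*} [CommRing R] [CommRing A]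
    [CommRing B] [CommRing D] [Algebra R A] [Algebra R B] [Algebra R D]
    {f : A →ₐ[R] B} (hf : Function.Surjective f) (g : A →ₐ[R] D) :
    (∃ g' : B →ₐ[R] D, g = g'.comp f) ↔ RingHom.ker f ≤ RingHom.ker g := by
  constructor
  · rintro ⟨g', rfl⟩ a ha
    simp_all [RingHom.mem_ker]
  · exact fun H ↦ ⟨f.liftOfSurjective hf g H, (f.liftOfSurjective_comp hf g H).symm⟩

namespace fiberProd

variable {A1 A2 C : Type} [CommRing A1] [CommRing A2] [CommRing C]
  [Algebra ℝ A1] [Algebra ℝ A2] [Algebra ℝ C] {p1 : A1 →ₐ[ℝ] C} {p2 : A2 →ₐ[ℝ] C}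

theorem mem_iff {x : A1 × A2} : x ∈ fiberProd p1 p2 ↔ p1 x.1 = p2 x.2 := Iff.rfl

variable (p1 p2) in
noncomputable abbrev fst : fiberProd p1 p2 →ₐ[ℝ] A1 :=
  (AlgHom.fst ℝ A1 A2).comp (fiberProd p1 p2).val

variable (p1 p2) in
noncomputable abbrev snd : fiberProd p1 p2 →ₐ[ℝ] A2 :=
  (AlgHom.snd ℝ A1 A2).comp (fiberProd p1 p2).val

variable (p1 p2) in
noncomputable abbrev toBase : fiberProd p1 p2 →ₐ[ℝ] C :=
  (p1.comp (AlgHom.fst ℝ A1 A2)).comp (fiberProd p1 p2).val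

theorem fst_surjective (hp2 : Function.Surjective p2) : Function.Surjective (fst p1 p2) := by
  intro a1
  obtain ⟨a2, ha2⟩ := hp2 (p1 a1)
  exact ⟨⟨(a1, a2), ha2.symm⟩, rfl⟩

theorem snd_surjective (hp1 : Function.Surjective p1) : Function.Surjective (snd p1 p2) := by
  intro a2
  obtain ⟨a1, ha1⟩ := hp1 (p2 a2)
  exact ⟨⟨(a1, a2), ha1⟩, rfl⟩

theorem toBase_surjective (hp1 : Function.Surjective p1) (hp2 : Function.Surjective p2) :
    Function.Surjective (toBase p1 p2) :=
  hp1.comp (fst_surjective hp2)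

theorem ker_toBase :
    RingHom.ker (toBase p1 p2) = RingHom.ker (fst p1 p2) ⊔ RingHom.ker (snd p1 p2) := by
  refine le_antisymm (fun x hx ↦ ?_) (sup_le (fun x hx ↦ ?_) (fun x hx ↦ ?_))
  · have hx1 : p1 (x : A1 × A2).1 = 0 := hx
    have hx2 : p2 (x : A1 × A2).2 = 0 := (mem_iff.mp x.2).symm.trans hx1
    have hu : ((0 : A1), (x : A1 × A2).2) ∈ fiberProd p1 p2 := by
      rw [mem_iff, map_zero, hx2]
    have hv : ((x : A1 × A2).1, (0 : A2)) ∈ fiberProd p1 p2 := by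
      rw [mem_iff, map_zero, hx1]
    have hsplit : x = ⟨_, hu⟩ + ⟨_, hv⟩ := by
      ext <;> simp
    rw [hsplit]
    exact Submodule.add_mem_sup (RingHom.mem_ker.mpr rfl) (RingHom.mem_ker.mpr rfl)
  · change p1 (x : A1 × A2).1 = 0
    rw [show (x : A1 × A2).1 = 0 from hx, map_zero]
  · change p1 (x : A1 × A2).1 = 0
    rw [mem_iff.mp x.2, show (x : A1 × A2).2 = 0 from hx, map_zero]

theorem ker_fst_mul_ker_snd : RingHom.ker (fst p1 p2) * RingHom.ker (snd p1 p2) = ⊥ := by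
  refine eq_bot_iff.mpr (Ideal.mul_le.mpr fun x hx y hy ↦ Ideal.mem_bot.mpr ?_)
  have hx1 : (x : A1 × A2).1 = 0 := hx
  have hy2 : (y : A1 × A2).2 = 0 := hy
  ext <;> simp [hx1, hy2]

end fiberProd

/-- a point `h ∈ Spec_ℝ A` lies in the image of both `|π₁|` and `|π₂|`
iff it factors through `C`; consequently `Spec_ℝ A` is the gluing of `Spec_ℝ A₁`
and `Spec_ℝ A₂` along `Spec_ℝ C` (every point comes from `A₁` or from `A₂`). -/
theorem spectrum_is_gluing
    {A1 A2 C : Type} [CommRing A1] [CommRing A2] [CommRing C]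
    [Algebra ℝ A1] [Algebra ℝ A2] [Algebra ℝ C]
    (p1 : A1 →ₐ[ℝ] C) (p2 : A2 →ₐ[ℝ] C)
    (hp1 : Function.Surjective p1) (hp2 : Function.Surjective p2) :
    (∀ h : fiberProd p1 p2 →ₐ[ℝ] ℝ,
      (((∃ h1 : A1 →ₐ[ℝ] ℝ,
            h = h1.comp ((AlgHom.fst ℝ A1 A2).comp (fiberProd p1 p2).val)) ∧
        (∃ h2 : A2 →ₐ[ℝ] ℝ,
            h = h2.comp ((AlgHom.snd ℝ A1 A2).comp (fiberProd p1 p2).val))) ↔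
        (∃ hC : C →ₐ[ℝ] ℝ,
            h = hC.comp ((p1.comp (AlgHom.fst ℝ A1 A2)).comp (fiberProd p1 p2).val)))) ∧
    (∀ h : fiberProd p1 p2 →ₐ[ℝ] ℝ,
      (∃ h1 : A1 →ₐ[ℝ] ℝ,
          h = h1.comp ((AlgHom.fst ℝ A1 A2).comp (fiberProd p1 p2).val)) ∨
      (∃ h2 : A2 →ₐ[ℝ] ℝ,
          h = h2.comp ((AlgHom.snd ℝ A1 A2).comp (fiberProd p1 p2).val))) := by
  refine ⟨fun h ↦ ?_, fun h ↦ ?_⟩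
  all_goals
    rw [AlgHom.exists_eq_comp_iff_ker_le (f := fiberProd.fst p1 p2)
        (fiberProd.fst_surjective hp2) h,
      AlgHom.exists_eq_comp_iff_ker_le (f := fiberProd.snd p1 p2)
        (fiberProd.snd_surjective hp1) h]
  · rw [AlgHom.exists_eq_comp_iff_ker_le (f := fiberProd.toBase p1 p2)
        (fiberProd.toBase_surjective hp1 hp2) h, fiberProd.ker_toBase, sup_le_iff]
  · rw [← (RingHom.ker_isPrime h).mul_le, fiberProd.ker_fst_mul_ker_snd]
    exact bot_le
end

section
/- Let A = A1 ×_C A2 with p1, p2 surjective, and let Δ : A → A be a differential operator of order ≤ k such that Δ(ker π1) ⊆ ker π1. Then there exists a unique ℝ-linear map Δ1 : A1 → A1 with π1 ∘ Δ = Δ1 ∘ π1, and Δ1 is a differential operator of order ≤ k on A1. -/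
/-- `δ_a(Δ) = a·Δ − Δ∘(a·)`. -/
noncomputable def deltaOp {A : Type} [CommRing A] [Algebra ℝ A]
    (a : A) (Δ : Module.End ℝ A) : Module.End ℝ A :=
  LinearMap.mulLeft ℝ a ∘ₗ Δ - Δ ∘ₗ LinearMap.mulLeft ℝ a

/-- `Δ` is a linear differential operator of order `≤ k`. -/
def IsDiffOp {A : Type} [CommRing A] [Algebra ℝ A]
    (k : ℕ) (Δ : Module.End ℝ A) : Prop :=
  ∀ a : Fin (k + 1) → A, (List.ofFn a).foldr deltaOp Δ = 0

/-!
An operator `Δ` preserving `ker π₁` induces `Δ₁` on `A₁ ≅ A / ker π₁`. Since `π₁` is a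
surjective algebra map, it carries each commutator `δ_a(Δ)` to `δ_{π₁ a}(Δ₁)`, so every
iterated commutator of `Δ₁` is the image of one of `Δ`, and those of length `k + 1` vanish.
-/

theorem LinearMap.existsUnique_comp_eq_of_surjective {R M N P : Type*} [Ring R]
    [AddCommGroup M] [AddCommGroup N] [AddCommGroup P] [Module R M] [Module R N] [Module R P]
    (f : M →ₗ[R] N) (hf : Function.Surjective f) (g : M →ₗ[R] P) (hker : ker f ≤ ker g) :
    ∃! h : N →ₗ[R] P, h ∘ₗ f = g := by
  refine ⟨(ker f).liftQ g hker ∘ₗ (f.quotKerEquivOfSurjective hf).symm.toLinearMap, ?_, ?_⟩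
  · ext x
    simp [quotKerEquivOfSurjective_symm_apply]
  · intro h hh
    rw [← cancel_right hf, hh]
    ext x
    simp [quotKerEquivOfSurjective_symm_apply]

section Intertwining

variable {A B : Type} [CommRing A] [Algebra ℝ A] [CommRing B] [Algebra ℝ B]
  (f : A →ₐ[ℝ] B) {D : Module.End ℝ A} {D1 : Module.End ℝ B}

theorem deltaOp_comp_of_comp_eq (h : D1 ∘ₗ f.toLinearMap = f.toLinearMap ∘ₗ D) (a : A) :
    deltaOp (f a) D1 ∘ₗ f.toLinearMap = f.toLinearMap ∘ₗ deltaOp a D := by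
  ext x
  have hx (y : A) : D1 (f y) = f (D y) := LinearMap.congr_fun h y
  simp [deltaOp, hx, ← map_mul]

theorem foldr_deltaOp_comp_of_comp_eq (h : D1 ∘ₗ f.toLinearMap = f.toLinearMap ∘ₗ D)
    (l : List A) :
    (l.map f).foldr deltaOp D1 ∘ₗ f.toLinearMap = f.toLinearMap ∘ₗ l.foldr deltaOp D := by
  induction l with
  | nil => exact h
  | cons a l ih => exact deltaOp_comp_of_comp_eq f ih a

theorem IsDiffOp.of_comp_eq {k : ℕ} (hf : Function.Surjective f) (hD : IsDiffOp k D)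
    (h : D1 ∘ₗ f.toLinearMap = f.toLinearMap ∘ₗ D) : IsDiffOp k D1 := by
  intro a
  choose b hb using fun i => hf (a i)
  have hab : List.ofFn a = (List.ofFn b).map f := by
    simp [List.map_ofFn, Function.comp_def, hb]
  rw [hab, ← LinearMap.cancel_right (g := f.toLinearMap) hf,
    foldr_deltaOp_comp_of_comp_eq f h, hD b, LinearMap.comp_zero, LinearMap.zero_comp]

end Intertwining

section FiberProd

variable {A1 A2 C : Type} [CommRing A1] [CommRing A2] [CommRing C]
  [Algebra ℝ A1] [Algebra ℝ A2] [Algebra ℝ C] (p1 : A1 →ₐ[ℝ] C)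

noncomputable def fiberProdFst (p2 : A2 →ₐ[ℝ] C) : fiberProd p1 p2 →ₐ[ℝ] A1 :=
  (AlgHom.fst ℝ A1 A2).comp (fiberProd p1 p2).val

theorem fiberProdFst_surjective {p2 : A2 →ₐ[ℝ] C} (hp2 : Function.Surjective p2) :
    Function.Surjective (fiberProdFst p1 p2) := by
  intro a1
  obtain ⟨a2, ha2⟩ := hp2 (p1 a1)
  exact ⟨⟨(a1, a2), by simp [fiberProd, AlgHom.mem_equalizer, ha2]⟩, rfl⟩

end FiberProd

theorem diffOp_descends_general
    {A1 A2 C : Type} [CommRing A1] [CommRing A2] [CommRing C]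
    [Algebra ℝ A1] [Algebra ℝ A2] [Algebra ℝ C]
    (p1 : A1 →ₐ[ℝ] C) (p2 : A2 →ₐ[ℝ] C)
    (hp2 : Function.Surjective p2)
    (k : ℕ) (Δ : Module.End ℝ (fiberProd p1 p2)) (hΔ : IsDiffOp k Δ)
    (hker : ∀ x : fiberProd p1 p2, (x : A1 × A2).1 = 0 → ((Δ x : A1 × A2)).1 = 0) :
    (∃! Δ1 : Module.End ℝ A1,
        ∀ x : fiberProd p1 p2, Δ1 (x : A1 × A2).1 = ((Δ x : A1 × A2)).1) ∧
    (∀ Δ1 : Module.End ℝ A1,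
        (∀ x : fiberProd p1 p2, Δ1 (x : A1 × A2).1 = ((Δ x : A1 × A2)).1) →
        IsDiffOp k Δ1) := by
  let π := (fiberProdFst p1 p2).toLinearMap
  have hπ : Function.Surjective (fiberProdFst p1 p2) := fiberProdFst_surjective p1 hp2
  have intertwines (Δ1 : Module.End ℝ A1) :
      (∀ x : fiberProd p1 p2, Δ1 (x : A1 × A2).1 = ((Δ x : A1 × A2)).1) ↔
        Δ1 ∘ₗ π = π ∘ₗ Δ :=
    ⟨fun h => LinearMap.ext h, fun h x => LinearMap.congr_fun h x⟩
  exact ⟨(existsUnique_congr intertwines).2 <|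
      π.existsUnique_comp_eq_of_surjective hπ _ fun x hx => hker x hx,
    fun Δ1 h => hΔ.of_comp_eq _ hπ ((intertwines Δ1).1 h)⟩

/-- if `Δ ∈ Diff_k(A)` preserves `ker π₁`, there is a unique linear
map `Δ₁ : A₁ → A₁` with `π₁ ∘ Δ = Δ₁ ∘ π₁`, and any such `Δ₁` is a
differential operator of order `≤ k` on `A₁`. -/
theorem diffOp_descends
    {A1 A2 C : Type} [CommRing A1] [CommRing A2] [CommRing C]
    [Algebra ℝ A1] [Algebra ℝ A2] [Algebra ℝ C]
    (p1 : A1 →ₐ[ℝ] C) (p2 : A2 →ₐ[ℝ] C)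
    (hp1 : Function.Surjective p1) (hp2 : Function.Surjective p2)
    (k : ℕ) (Δ : Module.End ℝ (fiberProd p1 p2)) (hΔ : IsDiffOp k Δ)
    (hker : ∀ x : fiberProd p1 p2, (x : A1 × A2).1 = 0 → ((Δ x : A1 × A2)).1 = 0) :
    (∃! Δ1 : Module.End ℝ A1,
        ∀ x : fiberProd p1 p2, Δ1 (x : A1 × A2).1 = ((Δ x : A1 × A2)).1) ∧
    (∀ Δ1 : Module.End ℝ A1,
        (∀ x : fiberProd p1 p2, Δ1 (x : A1 × A2).1 = ((Δ x : A1 × A2)).1) →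
        IsDiffOp k Δ1) :=
  diffOp_descends_general p1 p2 hp2 k Δ hΔ hker
end

section
/- Let A = A1 ×_C A2 and let Δ1 ∈ Diff_k(A1), Δ2 ∈ Diff_k(A2) be differential operators of order ≤ k satisfying p1 ∘ Δ1 ∘ π1 = p2 ∘ Δ2 ∘ π2. Then the map Δ : A → A, Δ(a1,a2) = (Δ1(a1), Δ2(a2)), is well defined (lands in A) and is a differential operator of order ≤ k on A; moreover it is the unique linear map commuting with both projections over Δ1 and Δ2. -/
/-!
The lift is the restriction of `Δ₁ × Δ₂` to the subalgebra `A ⊆ A₁ × A₂`; the compatibility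
condition says exactly that this restriction lands in `A`. Taking commutators with multiplication
commutes with any algebra homomorphism that intertwines two operators, so the inclusion
`A → A₁ × A₂` carries the iterated commutators of `Δ` to those of `Δ₁ × Δ₂`, which vanish
componentwise; injectivity of the inclusion then gives `IsDiffOp k Δ`.
-/

section

variable {A B : Type} [CommRing A] [CommRing B] [Algebra ℝ A] [Algebra ℝ B]

theorem AlgHom.comp_deltaOp_of_comp_eq (f : B →ₐ[ℝ] A) {Δ : Module.End ℝ B}
    {D : Module.End ℝ A} (h : f.toLinearMap ∘ₗ Δ = D ∘ₗ f.toLinearMap) (b : B) :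
    f.toLinearMap ∘ₗ deltaOp b Δ = deltaOp (f b) D ∘ₗ f.toLinearMap := by
  ext x
  have hx := LinearMap.congr_fun h x
  have hbx := LinearMap.congr_fun h (b * x)
  simp only [LinearMap.comp_apply, AlgHom.toLinearMap_apply] at hx hbx
  simp [deltaOp, ← hx, hbx]

theorem AlgHom.comp_foldr_deltaOp_of_comp_eq (f : B →ₐ[ℝ] A) {Δ : Module.End ℝ B}
    {D : Module.End ℝ A} (h : f.toLinearMap ∘ₗ Δ = D ∘ₗ f.toLinearMap) (l : List B) :
    f.toLinearMap ∘ₗ l.foldr deltaOp Δ = (l.map f).foldr deltaOp D ∘ₗ f.toLinearMap := by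
  induction l with
  | nil => exact h
  | cons b l ih => exact f.comp_deltaOp_of_comp_eq ih b

theorem AlgHom.comp_eq_zero_of_isDiffOp_of_comp_eq (f : B →ₐ[ℝ] A) {Δ : Module.End ℝ B}
    {D : Module.End ℝ A} {k : ℕ} (h : f.toLinearMap ∘ₗ Δ = D ∘ₗ f.toLinearMap)
    (hD : IsDiffOp k D) (a : Fin (k + 1) → B) :
    f.toLinearMap ∘ₗ (List.ofFn a).foldr deltaOp Δ = 0 := by
  rw [f.comp_foldr_deltaOp_of_comp_eq h, List.map_ofFn, hD, LinearMap.zero_comp]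

theorem IsDiffOp.of_injective (f : B →ₐ[ℝ] A) (hf : Function.Injective f)
    {Δ : Module.End ℝ B} {D : Module.End ℝ A} {k : ℕ}
    (h : f.toLinearMap ∘ₗ Δ = D ∘ₗ f.toLinearMap) (hD : IsDiffOp k D) : IsDiffOp k Δ := by
  intro a
  ext x
  apply hf
  simpa using LinearMap.congr_fun (f.comp_eq_zero_of_isDiffOp_of_comp_eq h hD a) x

theorem IsDiffOp.prodMap {k : ℕ} {Δ1 : Module.End ℝ A} {Δ2 : Module.End ℝ B}
    (h1 : IsDiffOp k Δ1) (h2 : IsDiffOp k Δ2) : IsDiffOp k (Δ1.prodMap Δ2) := by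
  intro a
  refine LinearMap.ext fun x => Prod.ext ?_ ?_
  · exact LinearMap.congr_fun
      ((AlgHom.fst ℝ A B).comp_eq_zero_of_isDiffOp_of_comp_eq (LinearMap.ext fun _ => rfl) h1 a) x
  · exact LinearMap.congr_fun
      ((AlgHom.snd ℝ A B).comp_eq_zero_of_isDiffOp_of_comp_eq (LinearMap.ext fun _ => rfl) h2 a) x

end

theorem diffOp_pair_lifts_general
    {A1 A2 C : Type} [CommRing A1] [CommRing A2] [CommRing C]
    [Algebra ℝ A1] [Algebra ℝ A2] [Algebra ℝ C]
    (p1 : A1 →ₐ[ℝ] C) (p2 : A2 →ₐ[ℝ] C)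
    (k : ℕ) (Δ1 : Module.End ℝ A1) (Δ2 : Module.End ℝ A2)
    (hΔ1 : IsDiffOp k Δ1) (hΔ2 : IsDiffOp k Δ2)
    (hcompat : ∀ x : fiberProd p1 p2, p1 (Δ1 (x : A1 × A2).1) = p2 (Δ2 (x : A1 × A2).2)) :
    (∃! Δ : Module.End ℝ (fiberProd p1 p2),
        ∀ x : fiberProd p1 p2,
          ((Δ x : A1 × A2)).1 = Δ1 (x : A1 × A2).1 ∧
          ((Δ x : A1 × A2)).2 = Δ2 (x : A1 × A2).2) ∧
    (∀ Δ : Module.End ℝ (fiberProd p1 p2),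
        (∀ x : fiberProd p1 p2,
          ((Δ x : A1 × A2)).1 = Δ1 (x : A1 × A2).1 ∧
          ((Δ x : A1 × A2)).2 = Δ2 (x : A1 × A2).2) →
        IsDiffOp k Δ) := by
  set S := fiberProd p1 p2
  have lifts_iff (Δ : Module.End ℝ S) :
      (∀ x : S, (Δ x : A1 × A2).1 = Δ1 (x : A1 × A2).1 ∧
        (Δ x : A1 × A2).2 = Δ2 (x : A1 × A2).2) ↔
        S.val.toLinearMap ∘ₗ Δ = Δ1.prodMap Δ2 ∘ₗ S.val.toLinearMap := by
    simp [LinearMap.ext_iff, Prod.ext_iff]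
  simp only [lifts_iff]
  refine ⟨⟨(Δ1.prodMap Δ2 ∘ₗ S.val.toLinearMap).codRestrict (Subalgebra.toSubmodule S) hcompat,
    rfl, ?_⟩, ?_⟩
  · intro Δ hΔ
    ext x : 2
    exact LinearMap.congr_fun hΔ x
  · intro Δ hΔ
    exact (hΔ1.prodMap hΔ2).of_injective S.val Subtype.val_injective hΔ

/-- a compatible pair `(Δ₁, Δ₂)` of order-`≤ k` differential
operators on `A₁, A₂` lifts to a unique linear map `Δ` of the fibered product
commuting with both projections, and this `Δ` is a differential operator of
order `≤ k` on `A`. -/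
theorem diffOp_pair_lifts
    {A1 A2 C : Type} [CommRing A1] [CommRing A2] [CommRing C]
    [Algebra ℝ A1] [Algebra ℝ A2] [Algebra ℝ C]
    (p1 : A1 →ₐ[ℝ] C) (p2 : A2 →ₐ[ℝ] C)
    (hp1 : Function.Surjective p1) (hp2 : Function.Surjective p2)
    (k : ℕ) (Δ1 : Module.End ℝ A1) (Δ2 : Module.End ℝ A2)
    (hΔ1 : IsDiffOp k Δ1) (hΔ2 : IsDiffOp k Δ2)
    (hcompat : ∀ x : fiberProd p1 p2, p1 (Δ1 (x : A1 × A2).1) = p2 (Δ2 (x : A1 × A2).2)) :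
    (∃! Δ : Module.End ℝ (fiberProd p1 p2),
        ∀ x : fiberProd p1 p2,
          ((Δ x : A1 × A2)).1 = Δ1 (x : A1 × A2).1 ∧
          ((Δ x : A1 × A2)).2 = Δ2 (x : A1 × A2).2) ∧
    (∀ Δ : Module.End ℝ (fiberProd p1 p2),
        (∀ x : fiberProd p1 p2,
          ((Δ x : A1 × A2)).1 = Δ1 (x : A1 × A2).1 ∧
          ((Δ x : A1 × A2)).2 = Δ2 (x : A1 × A2).2) →
        IsDiffOp k Δ) :=
  diffOp_pair_lifts_general p1 p2 k Δ1 Δ2 hΔ1 hΔ2 hcompat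
end

section
/- Let A = {(f,g) ∈ C^∞(ℝ)² : f(0) = g(0)} (functions on the coordinate cross). For a pair Δ = (Δ1, Δ2) with Δ1 = Σ a_i(x)(d/dx)^i, Δ2 = Σ b_i(y)(d/dy)^i of order ≤ k, the pair defines a differential operator on A (i.e. maps A to A and agrees through evaluation at 0) if and only if a_0(0) = b_0(0) and a_i(0) = 0 = b_i(0) for i = 1,…,k. -/
/-- The differential operator `Σ_{i=0}^k aᵢ(x) (d/dx)ⁱ` on functions on ℝ. -/
noncomputable def diffOp1D (k : ℕ) (a : ℕ → ℝ → ℝ) (f : ℝ → ℝ) : ℝ → ℝ :=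
  fun x => ∑ i ∈ Finset.range (k + 1), a i x * iteratedDeriv i f x

lemma iteratedDeriv_monomial (m n : ℕ) :
    iteratedDeriv m (fun x : ℝ => x ^ n) =
      fun x => (n.descFactorial m : ℝ) * x ^ (n - m) := by
  induction m with
  | zero => simp
  | succ m ih =>
    rw [iteratedDeriv_succ, ih]
    funext x
    rw [deriv_const_mul _ (by fun_prop)]
    rw [deriv_pow_field]
    rw [Nat.descFactorial_succ]
    rw [show n - (m + 1) = n - m - 1 by omega]
    push_cast
    rcases le_or_gt m n with h | h
    · rw [Nat.cast_sub h]; ring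
    · rw [Nat.sub_eq_zero_of_le h.le]
      simp [Nat.descFactorial_eq_zero_iff_lt.mpr h]

lemma iteratedDeriv_monomial_zero (m n : ℕ) :
    iteratedDeriv m (fun x : ℝ => x ^ n) 0 =
      if m = n then (n.factorial : ℝ) else 0 := by
  rw [iteratedDeriv_monomial]
  rcases lt_trichotomy m n with h | h | h
  · simp [h.ne, zero_pow (Nat.sub_ne_zero_of_lt h)]
  · subst h; simp [Nat.descFactorial_self]
  · simp [h.ne', Nat.descFactorial_eq_zero_iff_lt.mpr h]

lemma iteratedDeriv_zero_fun (m : ℕ) :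
    iteratedDeriv m (fun _ : ℝ => (0 : ℝ)) = fun _ => 0 := by
  induction m with
  | zero => simp
  | succ m ih => rw [iteratedDeriv_succ, ih]; simp

/-- on the coordinate cross (pairs `(f,g)` of smooth functions with
`f(0) = g(0)`), a pair `(Δ₁, Δ₂) = (Σ aᵢ ∂ⁱ, Σ bᵢ ∂ⁱ)` of order-`≤ k` operators
is compatible (i.e. `Δ₁(f)(0) = Δ₂(g)(0)` for all `(f,g)` in the algebra) iff
`a₀(0) = b₀(0)` and `aᵢ(0) = 0 = bᵢ(0)` for `i = 1,…,k`. -/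
theorem cross_diffOp_conditions (k : ℕ) (a b : ℕ → ℝ → ℝ)
    (ha : ∀ i, ContDiff ℝ (⊤ : ℕ∞) (a i)) (hb : ∀ i, ContDiff ℝ (⊤ : ℕ∞) (b i)) :
    (∀ f g : ℝ → ℝ, ContDiff ℝ (⊤ : ℕ∞) f → ContDiff ℝ (⊤ : ℕ∞) g → f 0 = g 0 →
        diffOp1D k a f 0 = diffOp1D k b g 0) ↔
      (a 0 0 = b 0 0 ∧ ∀ i, 1 ≤ i → i ≤ k → a i 0 = 0 ∧ b i 0 = 0) := by
  constructor
  · intro h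
    have hmono : ∀ n, ContDiff ℝ (⊤ : ℕ∞) (fun x : ℝ => x ^ n) := fun n => by fun_prop
    have hzero : ContDiff ℝ (⊤ : ℕ∞) (fun _ : ℝ => (0 : ℝ)) := contDiff_const
    have hΔ0 : ∀ c : ℕ → ℝ → ℝ, diffOp1D k c (fun _ => 0) 0 = 0 := by
      intro c
      simp [diffOp1D, iteratedDeriv_zero_fun]
    constructor
    · have hc : ∀ j, iteratedDeriv j (fun _ : ℝ => (1 : ℝ)) 0 =
          if j = 0 then 1 else 0 := by
        intro j
        simpa using iteratedDeriv_monomial_zero j 0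
      have := h (fun _ => 1) (fun _ => 1) contDiff_const contDiff_const rfl
      simpa [diffOp1D, hc, mul_ite, Finset.sum_ite_eq'] using this
    · intro i hi1 hik
      constructor
      · have := h (fun x => x ^ i) (fun _ => 0) (hmono i) hzero
          (by simp [zero_pow (by omega : i ≠ 0)])
        rw [hΔ0] at this
        have : ∑ j ∈ Finset.range (k + 1), a j 0 *
            iteratedDeriv j (fun x : ℝ => x ^ i) 0 = 0 := this
        simp only [iteratedDeriv_monomial_zero, mul_ite, mul_zero,
          Finset.sum_ite_eq' (Finset.range (k + 1)),
          Finset.mem_range, Nat.lt_succ_iff] at this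
        rw [if_pos hik] at this
        have hfac : (Nat.factorial i : ℝ) ≠ 0 := by positivity
        exact (mul_eq_zero.mp this).resolve_right hfac
      · have := h (fun _ => 0) (fun x => x ^ i) hzero (hmono i)
          (by simp [zero_pow (by omega : i ≠ 0)])
        rw [hΔ0] at this
        have : ∑ j ∈ Finset.range (k + 1), b j 0 *
            iteratedDeriv j (fun x : ℝ => x ^ i) 0 = 0 := this.symm
        simp only [iteratedDeriv_monomial_zero, mul_ite, mul_zero,
          Finset.sum_ite_eq' (Finset.range (k + 1)),
          Finset.mem_range, Nat.lt_succ_iff] at this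
        rw [if_pos hik] at this
        have hfac : (Nat.factorial i : ℝ) ≠ 0 := by positivity
        exact (mul_eq_zero.mp this).resolve_right hfac
  · rintro ⟨h0, hi⟩ f g hf hg hfg
    have key : ∀ (c : ℕ → ℝ → ℝ) (u : ℝ → ℝ), (∀ i, 1 ≤ i → i ≤ k → c i 0 = 0) →
        diffOp1D k c u 0 = c 0 0 * u 0 := by
      intro c u hc
      unfold diffOp1D
      rw [Finset.sum_eq_single 0]
      · simp
      · intro j hj hj0
        rw [hc j (by omega) (by simpa [Nat.lt_succ_iff] using hj)]
        ring
      · simp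
    rw [key a f (fun i h1 h2 => (hi i h1 h2).1), key b g (fun i h1 h2 => (hi i h1 h2).2),
      h0, hfg]
end
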